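/- arXiv:2309.13944 — 3 statements merged into one kernel-verified Lean document; each statement's English description precedes it below -/
import Mathlib

section
/- Let 0 ≤ γ ≤ 1 and define the ReLU-like activation σ(x) = max(x, γx). Let l ≤ u be reals and let x ∈ [l, u]. Define parameters (α_L, α_U, β_L, β_U) according to Table 1 of the paper: if l ≥ 0, set α_L = α_U = 1 and β_L = β_U = 0; if u ≤ 0, set α_L = α_U = γ and β_L = β_U = 0; otherwise (l < 0 < u), set α_L = α_U = (u − γl)/(u − l), β_L = 0, and β_U = (γ − 1)ul/(u − γl). Then α_L(x + β_L) ≤ σ(x) ≤ α_U(x + β_U). -/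
/-- Validity of the linear bounds in Table 1 for ReLU-like activations
`σ(x) = max(x, γx)` with slope `0 ≤ γ ≤ 1` on the interval `[l, u]`. -/
theorem relu_like_linear_bounds (γ : ℝ) (hγ0 : 0 ≤ γ) (hγ1 : γ ≤ 1)
    (l u x : ℝ) (hlu : l ≤ u) (hxl : l ≤ x) (hxu : x ≤ u) :
    (if 0 ≤ l then (1 : ℝ) else if u ≤ 0 then γ else (u - γ * l) / (u - l)) *
        (x + (if 0 ≤ l then (0 : ℝ) else if u ≤ 0 then 0 else 0))
      ≤ max x (γ * x) ∧
    max x (γ * x)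
      ≤ (if 0 ≤ l then (1 : ℝ) else if u ≤ 0 then γ else (u - γ * l) / (u - l)) *
          (x + (if 0 ≤ l then (0 : ℝ) else if u ≤ 0 then 0
                else (γ - 1) * u * l / (u - γ * l))) := by
  rcases le_or_gt 0 l with hl | hl
  · simp only [if_pos hl, one_mul, add_zero]
    have hx0 : 0 ≤ x := le_trans hl hxl
    exact ⟨le_max_left _ _, max_le le_rfl (by nlinarith)⟩
  · rcases le_or_gt u 0 with hu | hu
    · simp only [if_neg (not_le.mpr hl), if_pos hu, add_zero]
      have hx0 : x ≤ 0 := le_trans hxu hu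
      exact ⟨le_max_right _ _, max_le (by nlinarith) le_rfl⟩
    · simp only [if_neg (not_le.mpr hl), if_neg (not_le.mpr hu)]
      have hd : 0 < u - l := by linarith
      have he : 0 < u - γ * l := by nlinarith
      constructor
      · rw [add_zero, div_mul_eq_mul_div, div_le_iff₀ hd]
        rcases le_or_gt 0 x with hx | hx
        · nlinarith [le_max_left x (γ*x), mul_nonneg (mul_nonneg hx (neg_nonneg.mpr hl.le)) (sub_nonneg.mpr hγ1)]
        · nlinarith [le_max_right x (γ*x), mul_nonneg (mul_nonneg (neg_nonneg.mpr hx.le) hu.le) (sub_nonneg.mpr hγ1)]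
      · have hrw : (u - γ*l)/(u-l) * (x + (γ-1)*u*l/(u-γ*l))
            = ((u-γ*l)*x + (γ-1)*u*l)/(u-l) := by
          field_simp
        rw [hrw, le_div_iff₀ hd]
        rcases max_cases x (γ*x) with ⟨h, -⟩ | ⟨h, -⟩ <;> rw [h]
        · nlinarith [mul_nonneg (mul_nonneg (sub_nonneg.mpr hγ1) (neg_nonneg.mpr hl.le)) (sub_nonneg.mpr hxu)]
        · nlinarith [mul_nonneg (mul_nonneg hu.le (sub_nonneg.mpr hγ1)) (sub_nonneg.mpr hxl)]
end

section
/- Let σ : ℝ → ℝ, let d₁, d₂ ∈ ℕ, let h ∈ ℝ^{d₁}, W ∈ ℝ^{d₁×d₂}, and b, w ∈ ℝ^{d₂}, and set p_m = (∑_{l=1}^{d₁} h_l W_{l,m}) + b_m for m ∈ {1,…,d₂}. Suppose for each m there are reals α_{L,m}, α_{U,m}, β_{L,m}, β_{U,m} with α_{L,m}(p_m + β_{L,m}) ≤ σ(p_m) ≤ α_{U,m}(p_m + β_{U,m}). Define λ_m = α_{L,m} if w_m ≥ 0 and λ_m = α_{U,m} otherwise; Δ_m = β_{L,m} if w_m ≥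 0 and Δ_m = β_{U,m} otherwise; Λ_m = w_m λ_m; W̃ = ∑_{m=1}^{d₂} Λ_m W_{:,m} ∈ ℝ^{d₁}; and b̃ = ∑_{m=1}^{d₂} Λ_m (b_m + Δ_m). Then ∑_{m=1}^{d₂} w_m σ(p_m) ≥ h · W̃ + b̃. -/
/-- Second-layer propagation step: a weighted sum of activated affine outputs is
lower-bounded by an affine function `h · W̃ + b̃` of the layer input `h`, with the
collapsed weights determined by the sign-based choice of relaxation parameters. -/
theorem layer_collapse_lower_bound (σ : ℝ → ℝ) (d1 d2 : ℕ)
    (h : Fin d1 → ℝ) (W : Matrix (Fin d1) (Fin d2) ℝ) (b w : Fin d2 → ℝ)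
    (p : Fin d2 → ℝ) (hp : ∀ m, p m = (∑ l, h l * W l m) + b m)
    (αL αU βL βU : Fin d2 → ℝ)
    (hrelax : ∀ m, αL m * (p m + βL m) ≤ σ (p m) ∧ σ (p m) ≤ αU m * (p m + βU m)) :
    ∑ m, w m * σ (p m)
      ≥ (∑ l, h l * (∑ m, (w m * (if 0 ≤ w m then αL m else αU m)) * W l m))
        + ∑ m, (w m * (if 0 ≤ w m then αL m else αU m)) *
            (b m + (if 0 ≤ w m then βL m else βU m)) := by
  have key : (∑ l, h l * (∑ m, (w m * (if 0 ≤ w m then αL m else αU m)) * W l m))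
        + ∑ m, (w m * (if 0 ≤ w m then αL m else αU m)) *
            (b m + (if 0 ≤ w m then βL m else βU m))
      = ∑ m, (w m * (if 0 ≤ w m then αL m else αU m)) *
          (p m + (if 0 ≤ w m then βL m else βU m)) := by
    simp only [Finset.mul_sum, mul_add]
    rw [Finset.sum_comm, ← Finset.sum_add_distrib]
    apply Finset.sum_congr rfl
    intro m _
    have hc : (∑ l, h l * ((w m * (if 0 ≤ w m then αL m else αU m)) * W l m))
        = (w m * (if 0 ≤ w m then αL m else αU m)) * ∑ l, h l * W l m := by
      rw [Finset.mul_sum]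
      exact Finset.sum_congr rfl fun l _ => by ring
    rw [hc, hp m]
    ring
  rw [ge_iff_le, key]
  apply Finset.sum_le_sum
  intro m _
  rcases le_or_gt 0 (w m) with hw | hw
  · simp only [if_pos hw]
    rw [mul_assoc]
    exact mul_le_mul_of_nonneg_left (hrelax m).1 hw
  · simp only [if_neg (not_le.mpr hw)]
    rw [mul_assoc]
    exact mul_le_mul_of_nonpos_left (hrelax m).2 hw.le
end

section
/- Let σ : ℝ → ℝ, let N, F, d₁, d₂ ∈ ℕ, let X ∈ ℝ^{N×F} with rows x_1,…,x_N, let Â ∈ ℝ^{N×N} have nonnegative entries â_{jk}, let W^{(1)} ∈ ℝ^{F×d₁}, b^{(1)} ∈ ℝ^{d₁}, W^{(2)} ∈ ℝ^{d₁×d₂}, b^{(2)} ∈ ℝ^{d₂}. Define P^{(1)}_{j,l} = ∑_{k} â_{j,k} (x_k · W^{(1)}_{:,l}) + b^{(1)}_l, H_{j,l} = σ(P^{(1)}_{j,l}), P^{(2)}_{i,m} = ∑_{j} â_{i,j} (H_j · W^{(2)}_{:,m}) + b^{(2)}_m, and z_{i,m} = σ(P^{(2)}_{i,m}). Fix a node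 i and a vector w ∈ ℝ^{d₂}. Assume: (i) for each m ∈ {1,…,d₂} there are reals α^{(2)}_{L,m}, α^{(2)}_{U,m}, β^{(2)}_{L,m}, β^{(2)}_{U,m} with α^{(2)}_{L,m}(P^{(2)}_{i,m} + β^{(2)}_{L,m}) ≤ σ(P^{(2)}_{i,m}) ≤ α^{(2)}_{U,m}(P^{(2)}_{i,m} + β^{(2)}_{U,m}); (ii) for each l ∈ {1,…,d₁} there are reals α^{(1)}_{L,l}, α^{(1)}_{U,l}, β^{(1)}_{L,l}, β^{(1)}_{U,l} such that for every node j: α^{(1)}_{L,l}(P^{(1)}_{j,l} + β^{(1)}_{L,l}) ≤ σ(P^{(1)}_{j,l}) ≤ α^{(1)}_{U,l}(P^{(1)}_{j,l} + β^{(1)}_{U,l}). Define λ^{(2)}_m = α^{(2)}_{L,m} if w_m ≥ 0 else α^{(2)}_{U,m}; Δ^{(2)}_m = β^{(2)}_{L,m} if w_m ≥ 0 else β^{(2)}_{U,m}; Λ^{(2)}_m = w_m λ^{(2)}_m; W̃^{(2)} = ∑_m Λ^{(2)}_m W^{(2)}_{:,m} ∈ ℝ^{d₁}; b̃^{(2)}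 = ∑_m Λ^{(2)}_m (b^{(2)}_m + Δ^{(2)}_m); λ^{(1)}_l = α^{(1)}_{L,l} if W̃^{(2)}_l ≥ 0 else α^{(1)}_{U,l}; Δ^{(1)}_l = β^{(1)}_{L,l} if W̃^{(2)}_l ≥ 0 else β^{(1)}_{U,l}; Λ^{(1)}_l = W̃^{(2)}_l λ^{(1)}_l; W̃^{(1)} = ∑_l Λ^{(1)}_l W^{(1)}_{:,l} ∈ ℝ^F; b̃^{(1)} = ∑_l Λ^{(1)}_l (b^{(1)}_l + Δ^{(1)}_l). Then z_i · w = ∑_{m} σ(P^{(2)}_{i,m}) w_m ≥ ∑_{j₁} â_{i,j₁} ( ∑_{j₂} â_{j₁,j₂} (x_{j₂} · W̃^{(1)}) + b̃^{(1)} ) + b̃^{(2)}. -/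
/-- Theorem 2 of the paper: bound-propagation lower bound for a two-layer GCN encoder
`f(X, Â) = σ(Â σ(Â X W⁽¹⁾ + b⁽¹⁾) W⁽²⁾ + b⁽²⁾)`.  The contrastive output
`z_i · w` is lower-bounded by an explicit expression in `Â`, `X`, and the collapsed
parameters `(W̃⁽¹⁾, b̃⁽¹⁾, b̃⁽²⁾)`. -/
theorem two_layer_gcn_lower_bound (σ : ℝ → ℝ) (N F d1 d2 : ℕ)
    (X : Matrix (Fin N) (Fin F) ℝ)
    (Ahat : Matrix (Fin N) (Fin N) ℝ) (hA : ∀ j k, 0 ≤ Ahat j k)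
    (W1 : Matrix (Fin F) (Fin d1) ℝ) (b1 : Fin d1 → ℝ)
    (W2 : Matrix (Fin d1) (Fin d2) ℝ) (b2 : Fin d2 → ℝ)
    (P1 : Matrix (Fin N) (Fin d1) ℝ)
    (hP1 : ∀ j l, P1 j l = (∑ k, Ahat j k * (∑ f, X k f * W1 f l)) + b1 l)
    (H : Matrix (Fin N) (Fin d1) ℝ) (hH : ∀ j l, H j l = σ (P1 j l))
    (P2 : Matrix (Fin N) (Fin d2) ℝ)
    (hP2 : ∀ i m, P2 i m = (∑ j, Ahat i j * (∑ l, H j l * W2 l m)) + b2 m)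
    (z : Matrix (Fin N) (Fin d2) ℝ) (hz : ∀ i m, z i m = σ (P2 i m))
    (i : Fin N) (w : Fin d2 → ℝ)
    (αL2 αU2 βL2 βU2 : Fin d2 → ℝ)
    (hrelax2 : ∀ m, αL2 m * (P2 i m + βL2 m) ≤ σ (P2 i m) ∧
        σ (P2 i m) ≤ αU2 m * (P2 i m + βU2 m))
    (αL1 αU1 βL1 βU1 : Fin d1 → ℝ)
    (hrelax1 : ∀ (j : Fin N) (l : Fin d1),
        αL1 l * (P1 j l + βL1 l) ≤ σ (P1 j l) ∧ σ (P1 j l) ≤ αU1 l * (P1 j l + βU1 l))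
    (lam2 Δ2 Λ2 : Fin d2 → ℝ)
    (hlam2 : ∀ m, lam2 m = if 0 ≤ w m then αL2 m else αU2 m)
    (hΔ2 : ∀ m, Δ2 m = if 0 ≤ w m then βL2 m else βU2 m)
    (hΛ2 : ∀ m, Λ2 m = w m * lam2 m)
    (Wt2 : Fin d1 → ℝ) (hWt2 : ∀ l, Wt2 l = ∑ m, Λ2 m * W2 l m)
    (bt2 : ℝ) (hbt2 : bt2 = ∑ m, Λ2 m * (b2 m + Δ2 m))
    (lam1 Δ1 Λ1 : Fin d1 → ℝ)
    (hlam1 : ∀ l, lam1 l = if 0 ≤ Wt2 l then αL1 l else αU1 l)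
    (hΔ1 : ∀ l, Δ1 l = if 0 ≤ Wt2 l then βL1 l else βU1 l)
    (hΛ1 : ∀ l, Λ1 l = Wt2 l * lam1 l)
    (Wt1 : Fin F → ℝ) (hWt1 : ∀ f, Wt1 f = ∑ l, Λ1 l * W1 f l)
    (bt1 : ℝ) (hbt1 : bt1 = ∑ l, Λ1 l * (b1 l + Δ1 l)) :
    (∑ m, z i m * w m = ∑ m, σ (P2 i m) * w m) ∧
    (∑ m, z i m * w m
      ≥ ∑ j1, Ahat i j1 * ((∑ j2, Ahat j1 j2 * (∑ f, X j2 f * Wt1 f)) + bt1) + bt2) := by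
  have key_step : ∀ (c aL aU bL bU p s : ℝ),
      aL * (p + bL) ≤ s → s ≤ aU * (p + bU) →
      c * (if 0 ≤ c then aL else aU) * (p + (if 0 ≤ c then bL else bU)) ≤ c * s := by
    intro c aL aU bL bU p s h1 h2
    split_ifs with h
    · calc c * aL * (p + bL) = c * (aL * (p + bL)) := by ring
        _ ≤ c * s := mul_le_mul_of_nonneg_left h1 h
    · push_neg at h
      nlinarith [mul_nonneg (neg_nonneg.2 h.le) (sub_nonneg.2 h2)]
  have heq : ∑ m, z i m * w m = ∑ m, σ (P2 i m) * w m :=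
    Finset.sum_congr rfl fun m _ => by rw [hz]
  refine ⟨heq, ?_⟩
  rw [heq]
  -- layer 1 pointwise bound
  have h1 : ∀ (j : Fin N) (l : Fin d1), Λ1 l * (P1 j l + Δ1 l) ≤ Wt2 l * σ (P1 j l) := by
    intro j l
    rw [hΛ1, hlam1, hΔ1]
    exact key_step _ _ _ _ _ _ _ (hrelax1 j l).1 (hrelax1 j l).2
  -- layer 2 pointwise bound
  have h2 : ∀ m, Λ2 m * (P2 i m + Δ2 m) ≤ σ (P2 i m) * w m := by
    intro m
    rw [hΛ2, hlam2, hΔ2, mul_comm (σ (P2 i m)) (w m)]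
    exact key_step _ _ _ _ _ _ _ (hrelax2 m).1 (hrelax2 m).2
  have sum2 : ∑ m, Λ2 m * (P2 i m + Δ2 m) ≤ ∑ m, σ (P2 i m) * w m :=
    Finset.sum_le_sum fun m _ => h2 m
  -- algebraic identity for layer 2 collapse
  have eqA : ∑ m, Λ2 m * (P2 i m + Δ2 m)
      = (∑ j, Ahat i j * (∑ l, H j l * Wt2 l)) + bt2 := by
    rw [hbt2]
    have : ∀ m, Λ2 m * (P2 i m + Δ2 m)
        = Λ2 m * ((∑ j, Ahat i j * (∑ l, H j l * W2 l m)) + (b2 m + Δ2 m)) := by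
      intro m; rw [hP2]; ring
    rw [Finset.sum_congr rfl fun m _ => this m]
    simp only [hWt2, Finset.mul_sum, Finset.sum_mul, mul_add, Finset.sum_add_distrib]
    congr 1
    rw [Finset.sum_comm]
    refine Finset.sum_congr rfl fun j _ => ?_
    rw [Finset.sum_comm]
    refine Finset.sum_congr rfl fun l _ => Finset.sum_congr rfl fun m _ => by ring
  -- algebraic identity for layer 1 collapse
  have eqB : ∀ j : Fin N, ∑ l, Λ1 l * (P1 j l + Δ1 l)
      = (∑ k, Ahat j k * (∑ f, X k f * Wt1 f)) + bt1 := by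
    intro j
    rw [hbt1]
    have : ∀ l, Λ1 l * (P1 j l + Δ1 l)
        = Λ1 l * ((∑ k, Ahat j k * (∑ f, X k f * W1 f l)) + (b1 l + Δ1 l)) := by
      intro l; rw [hP1]; ring
    rw [Finset.sum_congr rfl fun l _ => this l]
    simp only [hWt1, Finset.mul_sum, Finset.sum_mul, mul_add, Finset.sum_add_distrib]
    congr 1
    rw [Finset.sum_comm]
    refine Finset.sum_congr rfl fun k _ => ?_
    rw [Finset.sum_comm]
    refine Finset.sum_congr rfl fun f _ => Finset.sum_congr rfl fun l _ => by ring
  have sum1 : ∑ j, Ahat i j * ((∑ k, Ahat j k * (∑ f, X k f * Wt1 f)) + bt1)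
      ≤ ∑ j, Ahat i j * (∑ l, H j l * Wt2 l) := by
    refine Finset.sum_le_sum fun j _ => ?_
    rw [← eqB j]
    refine mul_le_mul_of_nonneg_left ?_ (hA i j)
    refine Finset.sum_le_sum fun l _ => ?_
    rw [hH, mul_comm (σ (P1 j l)) (Wt2 l)]
    exact h1 j l
  calc ∑ j1, Ahat i j1 * ((∑ j2, Ahat j1 j2 * (∑ f, X j2 f * Wt1 f)) + bt1) + bt2
      ≤ (∑ j, Ahat i j * (∑ l, H j l * Wt2 l)) + bt2 := by linarith [sum1]
    _ = ∑ m, Λ2 m * (P2 i m + Δ2 m) := eqA.symm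
    _ ≤ ∑ m, σ (P2 i m) * w m := sum2
end
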